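/- If g, f: S → S are pei-injections of an orthohedral set S of rank n, then the height of the composition satisfies h(gf) = h(g) + h(f), where h(f) := h(S − f(S)) is the number of rank-(n−1) germs of the complement of the image. -/

import Mathlib

open Pointwise

namespace PeiPaper

/-- Points of the face of the standard orthant spanned by the canonical basis vectors in `Y`. -/
def stdFace (N : ℕ) (Y : Finset (Fin N)) : Set (Fin N → ℤ) :=
  {v | (∀ i, 0 ≤ v i) ∧ ∀ i, i ∉ Y → v i = 0}

/-- Integral orthogonal matrix. -/
def IsOrthMat {N : ℕ} (A : Matrix (Fin N) (Fin N) ℤ) : Prop :=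
  A * A.transpose = 1

/-- `L` is an integral orthant of rank `k` in `ℤ^N`: an affine-orthogonal image of a
rank-`k` face of the standard orthant. -/
def IsOrthantOfRank {N : ℕ} (L : Set (Fin N → ℤ)) (k : ℕ) : Prop :=
  ∃ (a : Fin N → ℤ) (A : Matrix (Fin N) (Fin N) ℤ) (Y : Finset (Fin N)),
    IsOrthMat A ∧ Y.card = k ∧ L = (fun v => a + A.mulVec v) '' stdFace N Y

def IsOrthant {N : ℕ} (L : Set (Fin N → ℤ)) : Prop := ∃ k, IsOrthantOfRank L k

/-- `S` is orthohedral: a finite union of integral orthants. -/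
def IsOrthohedral {N : ℕ} (S : Set (Fin N → ℤ)) : Prop :=
  ∃ 𝓛 : Set (Set (Fin N → ℤ)), 𝓛.Finite ∧ (∀ L ∈ 𝓛, IsOrthant L) ∧ S = ⋃₀ 𝓛

/-- The rank of a set: the maximal rank of an orthant contained in it. -/
noncomputable def orthRank {N : ℕ} (S : Set (Fin N → ℤ)) : ℕ :=
  sSup {k | ∃ L, IsOrthantOfRank L k ∧ L ⊆ S}

/-- Commensurability: the intersection is nonempty and has the same rank as both sets. -/
def Commensurable {N : ℕ} (L L' : Set (Fin N → ℤ)) : Prop :=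
  (L ∩ L').Nonempty ∧ orthRank L = orthRank (L ∩ L') ∧ orthRank L' = orthRank (L ∩ L')

/-- The rank-`k` orthants contained in `S`. -/
def germSet {N : ℕ} (S : Set (Fin N → ℤ)) (k : ℕ) : Set (Set (Fin N → ℤ)) :=
  {L | IsOrthantOfRank L k ∧ L ⊆ S}

/-- The rank-`k` germs of `S`: commensurability classes of rank-`k` orthants of `S`. -/
def Germ {N : ℕ} (S : Set (Fin N → ℤ)) (k : ℕ) : Type _ :=
  Quot (fun L L' : germSet S k => Commensurable L.1 L'.1)

def germOf {N : ℕ} (S : Set (Fin N → ℤ)) (k : ℕ) (L : germSet S k) : Germ S k :=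
  Quot.mk _ L

/-- The number of rank-`k` germs of `S` (as a natural number; `0` if infinite). -/
noncomputable def heightAt {N : ℕ} (S : Set (Fin N → ℤ)) (k : ℕ) : ℕ :=
  Nat.card (Germ S k)

/-- The height of an orthohedral set: the number of germs of maximal rank. -/
noncomputable def height {N : ℕ} (S : Set (Fin N → ℤ)) : ℕ :=
  heightAt S (orthRank S)

/-- `f` is (the restriction of) an isometry of `ℤ^N` on `L`. -/
def IsometricOn {N : ℕ} (f : (Fin N → ℤ) → (Fin N → ℤ)) (L : Set (Fin N → ℤ)) : Prop :=
  ∃ (a : Fin N → ℤ) (A : Matrix (Fin N) (Fin N) ℤ),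
    IsOrthMat A ∧ ∀ x ∈ L, f x = a + A.mulVec x

/-- `f` is (the restriction of) a translation on `L`. -/
def TranslationOn {N : ℕ} (f : (Fin N → ℤ) → (Fin N → ℤ)) (L : Set (Fin N → ℤ)) : Prop :=
  ∃ a : Fin N → ℤ, ∀ x ∈ L, f x = a + x

/-- `f` is a piecewise-Euclidean-isometric map on `S`. -/
def IsPeiMapOn {N : ℕ} (S : Set (Fin N → ℤ)) (f : (Fin N → ℤ) → (Fin N → ℤ)) : Prop :=
  ∃ 𝓛 : Set (Set (Fin N → ℤ)), 𝓛.Finite ∧ (∀ L ∈ 𝓛, IsOrthant L) ∧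
    S = ⋃₀ 𝓛 ∧ 𝓛.PairwiseDisjoint id ∧ ∀ L ∈ 𝓛, IsometricOn f L

/-- `f` is a piecewise-Euclidean-translation map on `S`. -/
def IsPetMapOn {N : ℕ} (S : Set (Fin N → ℤ)) (f : (Fin N → ℤ) → (Fin N → ℤ)) : Prop :=
  ∃ 𝓛 : Set (Set (Fin N → ℤ)), 𝓛.Finite ∧ (∀ L ∈ 𝓛, IsOrthant L) ∧
    S = ⋃₀ 𝓛 ∧ 𝓛.PairwiseDisjoint id ∧ ∀ L ∈ 𝓛, TranslationOn f L

def IsPeiIso {N : ℕ} (S S' : Set (Fin N → ℤ)) (f : (Fin N → ℤ) → (Fin N → ℤ)) : Prop :=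
  IsPeiMapOn S f ∧ Set.InjOn f S ∧ f '' S = S'

def PeiIsomorphic {N : ℕ} (S S' : Set (Fin N → ℤ)) : Prop := ∃ f, IsPeiIso S S' f

def IsPetIso {N : ℕ} (S S' : Set (Fin N → ℤ)) (f : (Fin N → ℤ) → (Fin N → ℤ)) : Prop :=
  IsPetMapOn S f ∧ Set.InjOn f S ∧ f '' S = S'

def PetIsomorphic {N : ℕ} (S S' : Set (Fin N → ℤ)) : Prop := ∃ f, IsPetIso S S' f

/-- A pei-permutation of `S`: a permutation of `ℤ^N` supported on `S` which is pei on `S`. -/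
def IsPeiPerm {N : ℕ} (S : Set (Fin N → ℤ)) (g : Equiv.Perm (Fin N → ℤ)) : Prop :=
  IsPeiMapOn S ⇑g ∧ ∀ x ∉ S, g x = x

/-- The element `g` has rank at most `k`: it is supported on an orthohedral set of rank `≤ k`. -/
def rankLE {N : ℕ} (g : Equiv.Perm (Fin N → ℤ)) (k : ℕ) : Prop :=
  ∃ T : Set (Fin N → ℤ), IsOrthohedral T ∧ orthRank T ≤ k ∧ ∀ x ∉ T, g x = x

/-- `g` fixes every rank-`k` germ of `S`. -/
def FixesGerm {N : ℕ} (S : Set (Fin N → ℤ)) (k : ℕ) (g : Equiv.Perm (Fin N → ℤ)) : Prop :=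
  ∀ L, IsOrthantOfRank L k → L ⊆ S →
    ∃ L', IsOrthantOfRank L' k ∧ L' ⊆ L ∧ Commensurable L L' ∧
      IsometricOn (⇑g) L' ∧ Commensurable (⇑g '' L') L

/-- `g` fixes every rank-`k` germ of `S` and acts on its tangent coset by a translation. -/
def TranslatesGerm {N : ℕ} (S : Set (Fin N → ℤ)) (k : ℕ) (g : Equiv.Perm (Fin N → ℤ)) : Prop :=
  ∀ L, IsOrthantOfRank L k → L ⊆ S →
    ∃ L' a, IsOrthantOfRank L' k ∧ L' ⊆ L ∧ Commensurable L L' ∧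
      (∀ x ∈ L', g x = a + x) ∧ Commensurable (⇑g '' L') L

/-- `σ` is the map induced by `g` on the rank-`k` germs of `S`. -/
def InducesGermMap {N : ℕ} (S : Set (Fin N → ℤ)) (k : ℕ) (g : Equiv.Perm (Fin N → ℤ))
    (σ : Germ S k → Germ S k) : Prop :=
  ∀ L : germSet S k, ∃ (L'' : Set (Fin N → ℤ)) (M : germSet S k),
    IsOrthantOfRank L'' k ∧ L'' ⊆ L.1 ∧ Commensurable L.1 L'' ∧
    M.1 = ⇑g '' L'' ∧ σ (germOf S k L) = germOf S k M

/-- A finitary permutation which is even (has sign `1` on a finite invariant subset). -/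
def IsEvenFinitary {α : Type*} (σ : Equiv.Perm α) : Prop :=
  ∃ (F : Finset α) (σF : Equiv.Perm F),
    (∀ a ∉ F, σ a = a) ∧ (∀ a : F, σ (a : α) = (σF a : α)) ∧
    @Equiv.Perm.sign F (Classical.decEq _) inferInstance σF = 1

/-- `g` induces an even finitary permutation on the rank-`k` germs of `S`. -/
def IsEvenOnGerms {N : ℕ} (S : Set (Fin N → ℤ)) (k : ℕ) (g : Equiv.Perm (Fin N → ℤ)) : Prop :=
  ∃ σ : Equiv.Perm (Germ S k), InducesGermMap S k g ⇑σ ∧ IsEvenFinitary σ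

/-- Ordering of germs (of arbitrary ranks): `p ≤ q` if they have representatives `L ⊆ L'`. -/
def germLE {N : ℕ} (S : Set (Fin N → ℤ)) (p q : Σ k, Germ S k) : Prop :=
  ∃ (L : germSet S p.1) (L' : germSet S q.1),
    germOf S p.1 L = p.2 ∧ germOf S q.1 L' = q.2 ∧ L.1 ⊆ L'.1

/-- A maximal germ of `S`. -/
def IsMaxGerm {N : ℕ} (S : Set (Fin N → ℤ)) (p : Σ k, Germ S k) : Prop :=
  ∀ q, germLE S p q → germLE S q p

/-- A `0`-based orthant. -/
def IsBasedOrthant {N : ℕ} (L0 : Set (Fin N → ℤ)) : Prop :=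
  ∃ (A : Matrix (Fin N) (Fin N) ℤ) (Y : Finset (Fin N)),
    IsOrthMat A ∧ L0 = (fun v => A.mulVec v) '' stdFace N Y

/-- Two (oriented) parallel orthants. -/
def ParallelOrthants {N : ℕ} (L L' : Set (Fin N → ℤ)) : Prop :=
  ∃ a : Fin N → ℤ, L' = a +ᵥ L

/-- The indicator image `S_τ` of `S`: the union of the `0`-based parallel translates of
the orthants contained in `S`. -/
def indicatorImage {N : ℕ} (S : Set (Fin N → ℤ)) : Set (Fin N → ℤ) :=
  ⋃₀ {L0 | IsBasedOrthant L0 ∧ ∃ a : Fin N → ℤ, (a +ᵥ L0) ⊆ S}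

/-- The height function `h_S`: the number of maximal germs of `S` whose indicator is `L0`. -/
noncomputable def hFun {N : ℕ} (S : Set (Fin N → ℤ)) (L0 : Set (Fin N → ℤ)) : ℕ :=
  Nat.card {p : Σ k, Germ S k //
    IsMaxGerm S p ∧ ∃ L : germSet S p.1, germOf S p.1 L = p.2 ∧ ∃ a : Fin N → ℤ, L.1 = a +ᵥ L0}

/-- `S` is quasi-normal: the maximal based orthants of `S_τ` are exactly the support of `h_S`. -/
def QuasiNormal {N : ℕ} (S : Set (Fin N → ℤ)) : Prop :=
  ∀ L0 : Set (Fin N → ℤ),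
    (IsBasedOrthant L0 ∧ L0 ⊆ indicatorImage S ∧
      ∀ L1, IsBasedOrthant L1 → L1 ⊆ indicatorImage S → L0 ⊆ L1 → L1 ⊆ L0)
    ↔ (IsBasedOrthant L0 ∧ 0 < hFun S L0)

/-- The germ `q` of `S'` is the image of the germ `p` of `S` under the injective pei-map `f`. -/
def GermMapsTo {N : ℕ} (f : (Fin N → ℤ) → (Fin N → ℤ)) (S S' : Set (Fin N → ℤ))
    (p : Σ k, Germ S k) (q : Σ k, Germ S' k) : Prop :=
  p.1 = q.1 ∧ ∃ (L : germSet S p.1) (L'' : Set (Fin N → ℤ)) (M : germSet S' q.1),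
    germOf S p.1 L = p.2 ∧ IsOrthantOfRank L'' p.1 ∧ L'' ⊆ L.1 ∧ Commensurable L.1 L'' ∧
    M.1 = f '' L'' ∧ germOf S' q.1 M = q.2

/-- A stack of `h` parallel rank-`n` orthants. -/
def IsStack {N : ℕ} (S : Set (Fin N → ℤ)) (n h : ℕ) : Prop :=
  ∃ (L0 : Set (Fin N → ℤ)) (a : Fin h → (Fin N → ℤ)),
    IsOrthantOfRank L0 n ∧
    (Pairwise fun i j => Disjoint (a i +ᵥ L0) (a j +ᵥ L0)) ∧
    S = ⋃ i, a i +ᵥ L0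

/-- A coordinate half-space of `ℤ^N`. -/
def IsHalfSpace {N : ℕ} (H : Set (Fin N → ℤ)) : Prop :=
  ∃ (i : Fin N) (c : ℤ), H = {x | x i ≤ c} ∨ H = {x | c ≤ x i}

/-- The canonical embedding `ℤ^N → ℤ^{N+1}`. -/
def emb (N : ℕ) (x : Fin N → ℤ) : Fin (N + 1) → ℤ :=
  fun i => if h : (i : ℕ) < N then x ⟨i, h⟩ else 0

/-- The sum of all matrix entries of a finitely supported family of vectors. -/
noncomputable def totalSum (k : ℕ) (Γ : Type*) : (Γ →₀ (Fin k → ℤ)) →+ ℤ :=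
  Finsupp.liftAddHom (fun _ => ∑ i : Fin k, Pi.evalAddMonoidHom (fun _ => ℤ) i)

/-- The clique (flag) complex of a graph. -/
def cliqueComplex {V : Type*} (G : SimpleGraph V) : Set (Finset V) :=
  {s | s.Nonempty ∧ G.IsClique (s : Set V)}

/-- The geometric realization of a simplicial complex on vertex set `V`. -/
def realization {V : Type*} (K : Set (Finset V)) : Set (V → ℝ) :=
  {f | (∀ v, 0 ≤ f v) ∧ ∃ s ∈ K, Function.support f ⊆ ↑s ∧ ∑ v ∈ s, f v = 1}

/-- A wedge (bouquet) of `n`-spheres indexed by `ι`, with basepoint `b`. -/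
noncomputable def wedgeSpheres (ι : Type) (n : ℕ)
    (b : Metric.sphere (0 : EuclideanSpace ℝ (Fin (n + 1))) 1) : Type :=
  Quot (fun p q : Unit ⊕ (ι × Metric.sphere (0 : EuclideanSpace ℝ (Fin (n + 1))) 1) =>
    (Sum.elim (fun _ => True) (fun pr => pr.2 = b) p) ∧
    (Sum.elim (fun _ => True) (fun qr => qr.2 = b) q))

noncomputable instance (ι : Type) (n : ℕ) (b : Metric.sphere (0 : EuclideanSpace ℝ (Fin (n + 1))) 1) :
    TopologicalSpace (wedgeSpheres ι n b) :=
  letI : TopologicalSpace ι := ⊥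
  instTopologicalSpaceQuot


/-!
Orthants of `ℤ^N` are exactly the boxes, products of points and half-lines, because an integral
orthogonal matrix is a signed permutation matrix. Far enough along the diagonal of a box `b`, the
translates of `b` lie inside every sub-box of the same rank and avoid every sub-box of smaller
rank. Hence two rank-`r` orthants are commensurable iff they share a rank-`r` suborthant, and a
rank-`r` orthant covered by finitely many orthohedral sets has a rank-`r` suborthant inside one of
them. So rank-`r` germs add up over disjoint unions of orthohedral sets, and an injective pei-map,
being an isometry on the pieces of a finite cover, carries the germs of `D` bijectively to those
of `f(D)`. As `S` has finitely many germs of top rank `n` and `f` permutes them, `S − f(S)` has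
rank `< n`; and `S − f(g(S))` is the disjoint union of `S − f(S)` and `f(S − g(S))`.
-/

open Matrix

inductive BoxFactor
  | point (c : ℤ)
  | up (c : ℤ)
  | down (c : ℤ)

namespace BoxFactor

open Filter

def carrier : BoxFactor → Set ℤ
  | point c => {c}
  | up c => Set.Ici c
  | down c => Set.Iic c

def base : BoxFactor → ℤ
  | point c | up c | down c => c

def isRay : BoxFactor → Bool
  | point _ => false
  | _ => true

def sign : BoxFactor → ℤ
  | down _ => -1
  | _ => 1

def ofSign (ray : Bool) (s c : ℤ) : BoxFactor :=
  if ray then (if s = 1 then up c else down c) else point c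

def shift : BoxFactor → ℕ → BoxFactor
  | point c, _ => point c
  | up c, M => up (c + M)
  | down c, M => down (c - M)

lemma base_mem (f : BoxFactor) : f.base ∈ f.carrier := by
  cases f <;> simp [base, carrier]

lemma isRay_ofSign (ray : Bool) (s c : ℤ) : (ofSign ray s c).isRay = ray := by
  unfold ofSign; split_ifs <;> simp_all [isRay]

lemma mem_carrier_ofSign {ray : Bool} {s : ℤ} (hs : s = 1 ∨ s = -1) (c x : ℤ) :
    x ∈ (ofSign ray s c).carrier ↔ 0 ≤ s * (x - c) ∧ (ray = false → s * (x - c) = 0) := by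
  unfold ofSign
  rcases hs with rfl | rfl <;> cases ray <;> simp [carrier] <;> omega

lemma ofSign_self (f : BoxFactor) : ofSign f.isRay f.sign f.base = f := by
  cases f <;> simp [ofSign, isRay, sign, base]

lemma sign_mul_self (f : BoxFactor) : f.sign * f.sign = 1 := by
  cases f <;> simp [sign]

lemma shift_subset (f : BoxFactor) (M : ℕ) : (f.shift M).carrier ⊆ f.carrier := by
  cases f <;> intro x <;> simp [shift, carrier] <;> omega

lemma isRay_shift (f : BoxFactor) (M : ℕ) : (f.shift M).isRay = f.isRay := by
  cases f <;> rfl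

lemma isRay_of_subset {f g : BoxFactor} (h : g.carrier ⊆ f.carrier) (hg : g.isRay) : f.isRay := by
  cases f with
  | point c =>
    cases g with
    | point d => simp [isRay] at hg
    | up d =>
      have h₁ := h (show d ∈ (up d).carrier by simp [carrier])
      have h₂ := h (show d + 1 ∈ (up d).carrier by simp [carrier])
      simp [carrier] at h₁ h₂; omega
    | down d =>
      have h₁ := h (show d ∈ (down d).carrier by simp [carrier])
      have h₂ := h (show d - 1 ∈ (down d).carrier by simp [carrier])
      simp [carrier] at h₁ h₂; omega
  | up c | down c => rfl

lemma eventually_shift {f g : BoxFactor} (h : g.carrier ⊆ f.carrier) :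
    ∀ᶠ M in atTop, (g.isRay = f.isRay → (f.shift M).carrier ⊆ g.carrier) ∧
      (g.isRay ≠ f.isRay → (f.shift M).base ∉ g.carrier) := by
  have hb := h g.base_mem
  -- a deep point of `g` lies in `f`: this rules out the impossible inclusions of a ray
  have hy := h (g.shift_subset _ (g.shift (f.base.natAbs + g.base.natAbs + 1)).base_mem)
  refine eventually_atTop.2 ⟨f.base.natAbs + g.base.natAbs + 1, fun M hM =>
    ⟨fun _ x hx => ?_, fun _ => ?_⟩⟩ <;>
  cases f <;> cases g <;> simp_all [carrier, shift, isRay, base, abs_eq_max_neg] <;> omega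

end BoxFactor

abbrev Box (N : ℕ) := Fin N → BoxFactor

namespace Box

open Filter

variable {N : ℕ}

def carrier (b : Box N) : Set (Fin N → ℤ) := Set.univ.pi fun i => (b i).carrier

def base (b : Box N) : Fin N → ℤ := fun i => (b i).base

def rays (b : Box N) : Finset (Fin N) := {i | (b i).isRay}

def rank (b : Box N) : ℕ := b.rays.card

def shift (b : Box N) (M : ℕ) : Box N := fun i => (b i).shift M

lemma base_mem (b : Box N) : b.base ∈ b.carrier := fun i _ => (b i).base_mem

lemma carrier_nonempty (b : Box N) : b.carrier.Nonempty := ⟨_, b.base_mem⟩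

lemma mem_rays {b : Box N} {i : Fin N} : i ∈ b.rays ↔ (b i).isRay := by
  simp [rays]

lemma factor_subset {b c : Box N} (h : c.carrier ⊆ b.carrier) (i : Fin N) :
    (c i).carrier ⊆ (b i).carrier :=
  (Set.pi_subset_pi_iff.1 h).resolve_right c.carrier_nonempty.ne_empty i (Set.mem_univ i)

lemma rays_subset {b c : Box N} (h : c.carrier ⊆ b.carrier) : c.rays ⊆ b.rays := fun i hi =>
  mem_rays.2 (BoxFactor.isRay_of_subset (factor_subset h i) (mem_rays.1 hi))

lemma rank_le_of_subset {b c : Box N} (h : c.carrier ⊆ b.carrier) : c.rank ≤ b.rank :=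
  Finset.card_le_card (rays_subset h)

lemma shift_subset (b : Box N) (M : ℕ) : (b.shift M).carrier ⊆ b.carrier :=
  Set.pi_mono fun i _ => (b i).shift_subset M

lemma rank_shift (b : Box N) (M : ℕ) : (b.shift M).rank = b.rank := by
  simp [rank, rays, shift, BoxFactor.isRay_shift]

lemma eventually_shift_subset {b c : Box N} (h : c.carrier ⊆ b.carrier) (hr : c.rank = b.rank) :
    ∀ᶠ M in atTop, (b.shift M).carrier ⊆ c.carrier := by
  have hrays : c.rays = b.rays := Finset.eq_of_subset_of_card_le (rays_subset h) hr.ge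
  filter_upwards [eventually_all.2 fun i => BoxFactor.eventually_shift (factor_subset h i)]
    with M hM
  refine Set.pi_mono fun i _ => (hM i).1 ?_
  have := congrArg (i ∈ ·) hrays
  simp only [mem_rays, eq_iff_iff] at this
  exact Bool.eq_iff_iff.2 this

lemma eventually_base_shift_notMem {b c : Box N} (h : c.carrier ⊆ b.carrier)
    (hr : c.rank < b.rank) : ∀ᶠ M in atTop, (b.shift M).base ∉ c.carrier := by
  obtain ⟨i, hib, hic⟩ := Finset.exists_of_ssubset
    ((rays_subset h).ssubset_of_ne fun he => hr.ne (congrArg Finset.card he))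
  filter_upwards [BoxFactor.eventually_shift (factor_subset h i)] with M hM hmem
  exact (hM.2 fun he => hic (mem_rays.2 (he ▸ mem_rays.1 hib))) (hmem i (Set.mem_univ i))

end Box

section Orthant

variable {N : ℕ}

lemma IsOrthMat.mem_image_iff {A : Matrix (Fin N) (Fin N) ℤ} (hA : IsOrthMat A)
    (a : Fin N → ℤ) (T : Set (Fin N → ℤ)) (x : Fin N → ℤ) :
    x ∈ (fun v => a + A *ᵥ v) '' T ↔ Aᵀ *ᵥ (x - a) ∈ T := by
  have hAA : Aᵀ * A = 1 := mul_eq_one_comm.mp hA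
  constructor
  · rintro ⟨v, hv, rfl⟩
    simpa [mulVec_mulVec, hAA] using hv
  · intro hx
    refine ⟨_, hx, ?_⟩
    simp only [mulVec_mulVec]
    rw [show A * Aᵀ = 1 from hA, one_mulVec, add_sub_cancel]

lemma exists_eq_single_of_sum_mul_self_eq_one (w : Fin N → ℤ) (h : ∑ j, w j * w j = 1) :
    ∃ j₀, (w j₀ = 1 ∨ w j₀ = -1) ∧ ∀ j ≠ j₀, w j = 0 := by
  obtain ⟨j₀, hj₀⟩ : ∃ j₀, w j₀ ≠ 0 := by
    by_contra! hw
    simp [hw] at h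
  have hrest : ∑ j ∈ Finset.univ.erase j₀, w j * w j = 1 - w j₀ * w j₀ := by
    rw [← h, Finset.sum_erase_eq_sub (Finset.mem_univ j₀)]
  have hpos : 0 < w j₀ * w j₀ := mul_self_pos.2 hj₀
  have hnn : 0 ≤ ∑ j ∈ Finset.univ.erase j₀, w j * w j :=
    Finset.sum_nonneg fun j _ => mul_self_nonneg (w j)
  have hone : w j₀ * w j₀ = 1 := by omega
  refine ⟨j₀, mul_self_eq_one_iff.1 hone, fun j hj => ?_⟩
  rw [hone, sub_self] at hrest
  refine mul_self_eq_zero.1 ((Finset.sum_eq_zero_iff_of_nonneg fun j _ => ?_).1 hrest j ?_)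
  · exact mul_self_nonneg (w j)
  · exact Finset.mem_erase.2 ⟨hj, Finset.mem_univ j⟩

lemma IsOrthMat.exists_signedPerm {A : Matrix (Fin N) (Fin N) ℤ} (hA : IsOrthMat A) :
    ∃ (σ : Equiv.Perm (Fin N)) (s : Fin N → ℤ), (∀ i, s i = 1 ∨ s i = -1) ∧
      ∀ i j, A i j = if σ i = j then s i else 0 := by
  have hrow : ∀ i i', ∑ j, A i j * A i' j = if i = i' then 1 else 0 := fun i i' => by
    simpa [mul_apply, one_apply] using congrFun (congrFun hA i) i'
  choose τ hτ using fun i =>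
    exists_eq_single_of_sum_mul_self_eq_one (A i) (by simpa using hrow i i)
  have hAτ : ∀ i j, A i j = if τ i = j then A i (τ i) else 0 := by
    intro i j
    split_ifs with h
    · rw [h]
    · exact (hτ i).2 j (Ne.symm h)
  have hne0 : ∀ i, A i (τ i) ≠ 0 := fun i => by rcases (hτ i).1 with h | h <;> simp [h]
  have hinj : Function.Injective τ := by
    intro i i' hii'
    by_contra hne
    have := hrow i i'
    rw [if_neg hne, Fintype.sum_eq_single (τ i) fun j hj => by
      rw [hAτ i j, if_neg (Ne.symm hj), zero_mul]] at this
    exact mul_ne_zero (hne0 i) (by rw [hii']; exact hne0 i') this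
  exact ⟨.ofBijective τ hinj.bijective_of_finite, fun i => A i (τ i), fun i => (hτ i).1, hAτ⟩

lemma image_stdFace_eq_box_carrier {A : Matrix (Fin N) (Fin N) ℤ} (hA : IsOrthMat A)
    {σ : Equiv.Perm (Fin N)} {s : Fin N → ℤ} (hs : ∀ i, s i = 1 ∨ s i = -1)
    (hAσ : ∀ i j, A i j = if σ i = j then s i else 0) (a : Fin N → ℤ) (Y : Finset (Fin N)) :
    (fun v => a + A *ᵥ v) '' stdFace N Y
      = Box.carrier fun i => .ofSign (decide (σ i ∈ Y)) (s i) (a i) := by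
  have hAt : ∀ w i, (Aᵀ *ᵥ w) (σ i) = s i * w i := by
    intro w i
    simp only [mulVec, dotProduct, transpose_apply, hAσ, σ.injective.eq_iff]
    simp
  ext x
  rw [hA.mem_image_iff]
  simp only [stdFace, Set.mem_ofPred_eq, Box.carrier, Set.mem_pi, Set.mem_univ, true_implies,
    BoxFactor.mem_carrier_ofSign (hs _)]
  rw [← forall_and, ← σ.forall_congr_right]
  simp [hAt]

lemma isOrthantOfRank_iff_box {L : Set (Fin N → ℤ)} {k : ℕ} :
    IsOrthantOfRank L k ↔ ∃ b : Box N, b.rank = k ∧ L = b.carrier := by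
  constructor
  · rintro ⟨a, A, Y, hA, rfl, rfl⟩
    obtain ⟨σ, s, hs, hAσ⟩ := hA.exists_signedPerm
    refine ⟨_, ?_, image_stdFace_eq_box_carrier hA hs hAσ a Y⟩
    exact Finset.card_equiv σ fun i => by simp [Box.mem_rays, BoxFactor.isRay_ofSign]
  · rintro ⟨b, rfl, rfl⟩
    have hA : IsOrthMat (diagonal fun i => (b i).sign) := by
      simp [IsOrthMat, diagonal_mul_diagonal, BoxFactor.sign_mul_self]
    refine ⟨b.base, _, b.rays, hA, rfl, ?_⟩
    rw [image_stdFace_eq_box_carrier hA (σ := 1) (s := fun i => (b i).sign) (fun i => ?_)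
      (fun i j => ?_)]
    · simp [Box.mem_rays, Box.base, BoxFactor.ofSign_self]
    · cases b i <;> simp [BoxFactor.sign]
    · simp only [diagonal_apply, Equiv.Perm.one_apply]
      congr

end Orthant

section Rank

variable {N : ℕ} {L L₁ L₂ M X Y : Set (Fin N → ℤ)} {j k r : ℕ}

lemma IsOrthantOfRank.nonempty (hL : IsOrthantOfRank L k) : L.Nonempty := by
  obtain ⟨b, -, rfl⟩ := isOrthantOfRank_iff_box.1 hL
  exact b.carrier_nonempty

lemma IsOrthantOfRank.le_of_subset (hL : IsOrthantOfRank L j) (hM : IsOrthantOfRank M k)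
    (h : L ⊆ M) : j ≤ k := by
  obtain ⟨b, rfl, rfl⟩ := isOrthantOfRank_iff_box.1 hL
  obtain ⟨c, rfl, rfl⟩ := isOrthantOfRank_iff_box.1 hM
  exact Box.rank_le_of_subset h

lemma isOrthantOfRank_singleton (x : Fin N → ℤ) : IsOrthantOfRank {x} 0 :=
  isOrthantOfRank_iff_box.2 ⟨fun i => .point (x i),
    by simp [Box.rank, Box.rays, BoxFactor.isRay],
    by ext; simp [Box.carrier, BoxFactor.carrier, funext_iff]⟩

lemma bddAbove_orthantRanks (X : Set (Fin N → ℤ)) :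
    BddAbove {k | ∃ L, IsOrthantOfRank L k ∧ L ⊆ X} := by
  refine ⟨N, fun k ⟨L, ⟨a, A, Y, _, hY, _⟩, _⟩ => ?_⟩
  simpa [← hY] using Finset.card_le_univ Y

lemma le_orthRank (hL : IsOrthantOfRank L k) (hLX : L ⊆ X) : k ≤ orthRank X :=
  le_csSup (bddAbove_orthantRanks X) ⟨L, hL, hLX⟩

lemma orthRank_le (h : ∀ k L, IsOrthantOfRank L k → L ⊆ X → k ≤ r) : orthRank X ≤ r :=
  csSup_le' fun k ⟨L, hL, hLX⟩ => h k L hL hLX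

lemma orthRank_mono (h : X ⊆ Y) : orthRank X ≤ orthRank Y :=
  orthRank_le fun _ _ hL hLX => le_orthRank hL (hLX.trans h)

lemma IsOrthantOfRank.orthRank_eq (hL : IsOrthantOfRank L k) : orthRank L = k :=
  le_antisymm (orthRank_le fun _ _ hM hML => hM.le_of_subset hL hML) (le_orthRank hL subset_rfl)

lemma exists_isOrthantOfRank_orthRank (hX : X.Nonempty) :
    ∃ L, IsOrthantOfRank L (orthRank X) ∧ L ⊆ X := by
  obtain ⟨x, hx⟩ := hX
  have h₀ : 0 ∈ {k | ∃ L, IsOrthantOfRank L k ∧ L ⊆ X} :=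
    ⟨{x}, isOrthantOfRank_singleton x, Set.singleton_subset_iff.2 hx⟩
  exact Nat.sSup_mem ⟨0, h₀⟩ (bddAbove_orthantRanks X)

/-- Deep enough translates of `L` lie in both `L₁` and `L₂`. -/
lemma IsOrthantOfRank.exists_subset_inter (hL : IsOrthantOfRank L r)
    (h₁ : IsOrthantOfRank L₁ r) (h₂ : IsOrthantOfRank L₂ r) (s₁ : L₁ ⊆ L) (s₂ : L₂ ⊆ L) :
    ∃ Z, IsOrthantOfRank Z r ∧ Z ⊆ L₁ ∩ L₂ := by
  obtain ⟨b, rfl, rfl⟩ := isOrthantOfRank_iff_box.1 hL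
  obtain ⟨b₁, hr₁, rfl⟩ := isOrthantOfRank_iff_box.1 h₁
  obtain ⟨b₂, hr₂, rfl⟩ := isOrthantOfRank_iff_box.1 h₂
  obtain ⟨M, hM₁, hM₂⟩ :=
    ((Box.eventually_shift_subset s₁ hr₁).and (Box.eventually_shift_subset s₂ hr₂)).exists
  exact ⟨_, isOrthantOfRank_iff_box.2 ⟨b.shift M, b.rank_shift M, rfl⟩,
    Set.subset_inter hM₁ hM₂⟩

/-- Deep enough points of `L` avoid all suborthants of smaller rank. -/
lemma IsOrthantOfRank.exists_mem_of_subset_sUnion (hL : IsOrthantOfRank L r)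
    {𝓚 : Set (Set (Fin N → ℤ))} (h𝓚 : 𝓚.Finite) (hK : ∀ K ∈ 𝓚, IsOrthant K ∧ K ⊆ L)
    (hcov : L ⊆ ⋃₀ 𝓚) : ∃ K ∈ 𝓚, IsOrthantOfRank K r := by
  obtain ⟨b, rfl, rfl⟩ := isOrthantOfRank_iff_box.1 hL
  by_contra! hlow
  have hdeep : ∀ K ∈ 𝓚, ∀ᶠ M in Filter.atTop, (b.shift M).base ∉ K := by
    intro K hK'
    obtain ⟨⟨k, hk⟩, hKL⟩ := hK K hK'
    obtain ⟨c, rfl, rfl⟩ := isOrthantOfRank_iff_box.1 hk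
    exact Box.eventually_base_shift_notMem hKL
      ((Box.rank_le_of_subset hKL).lt_of_ne fun he => hlow _ hK' (he ▸ hk))
  obtain ⟨M, hM⟩ := ((h𝓚.eventually_all).2 hdeep).exists
  obtain ⟨K, hK', hxK⟩ := hcov (b.shift_subset M (b.shift M).base_mem)
  exact hM K hK' hxK

lemma IsOrthantOfRank.exists_subset_inter_trans (hM : IsOrthantOfRank M r)
    (h₁ : ∃ Z, IsOrthantOfRank Z r ∧ Z ⊆ L₁ ∩ M) (h₂ : ∃ Z, IsOrthantOfRank Z r ∧ Z ⊆ M ∩ L₂) :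
    ∃ Z, IsOrthantOfRank Z r ∧ Z ⊆ L₁ ∩ L₂ := by
  obtain ⟨Z₁, hZ₁, hZ₁s⟩ := h₁
  obtain ⟨Z₂, hZ₂, hZ₂s⟩ := h₂
  obtain ⟨Z, hZ, hZs⟩ := hM.exists_subset_inter hZ₁ hZ₂
    (hZ₁s.trans Set.inter_subset_right) (hZ₂s.trans Set.inter_subset_left)
  exact ⟨Z, hZ, hZs.trans (Set.inter_subset_inter (hZ₁s.trans Set.inter_subset_left)
    (hZ₂s.trans Set.inter_subset_right))⟩

end Rank

def IsElementary (D : Set ℤ) : Prop := ∃ T : Set BoxFactor, T.Finite ∧ D = ⋃ f ∈ T, f.carrier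

namespace IsElementary

lemma carrier (f : BoxFactor) : IsElementary f.carrier :=
  ⟨{f}, Set.finite_singleton f, by simp⟩

lemma union {D E : Set ℤ} (hD : IsElementary D) (hE : IsElementary E) : IsElementary (D ∪ E) := by
  obtain ⟨T, hT, rfl⟩ := hD
  obtain ⟨T', hT', rfl⟩ := hE
  exact ⟨T ∪ T', hT.union hT', by rw [Set.biUnion_union]⟩

lemma of_finite {D : Set ℤ} (hD : D.Finite) : IsElementary D :=
  ⟨BoxFactor.point '' D, hD.image _, by ext; simp [BoxFactor.carrier, eq_comm]⟩

lemma compl_carrier (f : BoxFactor) : IsElementary f.carrierᶜ := by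
  cases f with
  | point c =>
    convert (carrier (.down (c - 1))).union (carrier (.up (c + 1))) using 1
    ext; simp [BoxFactor.carrier]
  | up c => convert carrier (.down (c - 1)) using 1; ext; simp [BoxFactor.carrier]
  | down c => convert carrier (.up (c + 1)) using 1; ext; simp [BoxFactor.carrier]

lemma univ : IsElementary (Set.univ : Set ℤ) := by
  simpa using (carrier (.point 0)).union (compl_carrier (.point 0))

lemma carrier_inter_carrier (f g : BoxFactor) : IsElementary (f.carrier ∩ g.carrier) := by
  cases f with
  | point c => exact of_finite ((Set.finite_singleton c).inter_of_left _)
  | up c =>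
    cases g with
    | point d => exact of_finite ((Set.finite_singleton d).inter_of_right _)
    | up d => convert carrier (.up (max c d)) using 1; simp [BoxFactor.carrier]
    | down d =>
      refine of_finite ?_
      rw [BoxFactor.carrier, BoxFactor.carrier, Set.Ici_inter_Iic]
      exact Set.finite_Icc c d
  | down c =>
    cases g with
    | point d => exact of_finite ((Set.finite_singleton d).inter_of_right _)
    | up d =>
      refine of_finite ?_
      rw [BoxFactor.carrier, BoxFactor.carrier, Set.inter_comm, Set.Ici_inter_Iic]
      exact Set.finite_Icc d c
    | down d => convert carrier (.down (min c d)) using 1; simp [BoxFactor.carrier]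

end IsElementary

section Orthohedral

variable {N : ℕ} {X Y L : Set (Fin N → ℤ)}

lemma Box.isOrthant (b : Box N) : IsOrthant b.carrier :=
  ⟨b.rank, isOrthantOfRank_iff_box.2 ⟨b, rfl, rfl⟩⟩

lemma IsOrthant.isOrthohedral (hL : IsOrthant L) : IsOrthohedral L :=
  ⟨{L}, Set.finite_singleton L, by simpa using hL, by simp⟩

lemma isOrthohedral_biUnion {ι : Type*} {s : Set ι} (hs : s.Finite) {X : ι → Set (Fin N → ℤ)}
    (h : ∀ i ∈ s, IsOrthohedral (X i)) : IsOrthohedral (⋃ i ∈ s, X i) := by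
  choose! 𝓛 h𝓛f h𝓛o h𝓛 using h
  refine ⟨⋃ i ∈ s, 𝓛 i, hs.biUnion h𝓛f, fun L hL => ?_, ?_⟩
  · obtain ⟨i, hi, hL⟩ := Set.mem_iUnion₂.1 hL
    exact h𝓛o i hi L hL
  · simp only [Set.sUnion_iUnion]
    exact Set.iUnion₂_congr h𝓛

lemma isOrthohedral_pi {D : Fin N → Set ℤ} (hD : ∀ i, IsElementary (D i)) :
    IsOrthohedral (Set.univ.pi D) := by
  choose T hT hDT using hD
  have : Set.univ.pi D = ⋃ b ∈ Set.univ.pi T, Box.carrier b := by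
    ext x
    simp only [Set.mem_pi, Set.mem_univ, true_implies, hDT, Set.mem_iUnion, exists_prop,
      Box.carrier]
    exact ⟨fun h => ⟨fun i => (h i).choose, fun i => (h i).choose_spec.1,
      fun i => (h i).choose_spec.2⟩, fun ⟨b, hbT, hb⟩ i => ⟨b i, hbT i, hb i⟩⟩
  rw [this]
  exact isOrthohedral_biUnion (Set.Finite.pi hT) fun b _ => (Box.isOrthant b).isOrthohedral

lemma IsOrthant.isOrthohedral_inter (hX : IsOrthant X) (hY : IsOrthant Y) :
    IsOrthohedral (X ∩ Y) := by
  obtain ⟨_, hX⟩ := hX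
  obtain ⟨_, hY⟩ := hY
  obtain ⟨b, -, rfl⟩ := isOrthantOfRank_iff_box.1 hX
  obtain ⟨c, -, rfl⟩ := isOrthantOfRank_iff_box.1 hY
  rw [Box.carrier, Box.carrier, ← Set.pi_inter_distrib]
  exact isOrthohedral_pi fun i => IsElementary.carrier_inter_carrier _ _

lemma IsOrthant.isOrthohedral_compl (hX : IsOrthant X) : IsOrthohedral Xᶜ := by
  classical
  obtain ⟨_, hX⟩ := hX
  obtain ⟨b, -, rfl⟩ := isOrthantOfRank_iff_box.1 hX
  have : (b.carrier)ᶜ =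
      ⋃ i ∈ Set.univ, Set.univ.pi (Function.update (fun _ => Set.univ) i (b i).carrierᶜ) := by
    ext x
    simp [Box.carrier, Function.update_apply]
  rw [this]
  refine isOrthohedral_biUnion Set.finite_univ fun i _ => isOrthohedral_pi fun j => ?_
  rcases eq_or_ne j i with rfl | hji
  · simpa using IsElementary.compl_carrier (b j)
  · simpa [hji] using IsElementary.univ

lemma IsOrthohedral.inter (hX : IsOrthohedral X) (hY : IsOrthohedral Y) :
    IsOrthohedral (X ∩ Y) := by
  obtain ⟨𝓛, h𝓛, h𝓛o, rfl⟩ := hX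
  obtain ⟨𝓜, h𝓜, h𝓜o, rfl⟩ := hY
  rw [Set.sUnion_inter_sUnion]
  exact isOrthohedral_biUnion (h𝓛.prod h𝓜) fun p hp =>
    (h𝓛o p.1 hp.1).isOrthohedral_inter (h𝓜o p.2 hp.2)

lemma IsOrthohedral.compl (hX : IsOrthohedral X) : IsOrthohedral Xᶜ := by
  obtain ⟨𝓛, h𝓛, h𝓛o, rfl⟩ := hX
  induction 𝓛, h𝓛 using Set.Finite.induction_on with
  | empty => simpa using isOrthohedral_pi (N := N) fun _ => IsElementary.univ
  | @insert L 𝓛 _ _ ih =>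
    rw [Set.sUnion_insert, Set.compl_union]
    exact (h𝓛o L (Set.mem_insert L 𝓛)).isOrthohedral_compl.inter
      (ih fun K hK => h𝓛o K (Set.mem_insert_of_mem L hK))

lemma IsOrthohedral.diff (hX : IsOrthohedral X) (hY : IsOrthohedral Y) :
    IsOrthohedral (X \ Y) :=
  hX.inter hY.compl

end Orthohedral

section Maps

variable {N : ℕ} {L M P S D X : Set (Fin N → ℤ)} {r : ℕ} {f : (Fin N → ℤ) → (Fin N → ℤ)}

lemma IsOrthantOfRank.exists_subset_of_subset_biUnion (hL : IsOrthantOfRank L r) {ι : Type*}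
    {s : Set ι} (hs : s.Finite) {Y : ι → Set (Fin N → ℤ)} (hY : ∀ i ∈ s, IsOrthohedral (Y i))
    (hcov : L ⊆ ⋃ i ∈ s, Y i) : ∃ i ∈ s, ∃ L', IsOrthantOfRank L' r ∧ L' ⊆ L ∩ Y i := by
  have hLY : ∀ i ∈ s, IsOrthohedral (L ∩ Y i) := fun i hi =>
    IsOrthant.isOrthohedral ⟨r, hL⟩ |>.inter (hY i hi)
  choose! 𝓛 h𝓛f h𝓛o h𝓛 using hLY
  have hsub : ∀ i ∈ s, ∀ K ∈ 𝓛 i, K ⊆ L ∩ Y i := fun i hi K hK =>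
    (h𝓛 i hi).symm ▸ Set.subset_sUnion_of_mem hK
  obtain ⟨K, hK, hKr⟩ := hL.exists_mem_of_subset_sUnion (𝓚 := ⋃ i ∈ s, 𝓛 i) (hs.biUnion h𝓛f)
    (fun K hK => by
      obtain ⟨i, hi, hK⟩ := Set.mem_iUnion₂.1 hK
      exact ⟨h𝓛o i hi K hK, (hsub i hi K hK).trans Set.inter_subset_left⟩)
    (fun x hx => by
      obtain ⟨i, hi, hxi⟩ := Set.mem_iUnion₂.1 (hcov hx)
      obtain ⟨K, hK, hxK⟩ := (h𝓛 i hi ▸ ⟨hx, hxi⟩ : x ∈ ⋃₀ 𝓛 i)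
      exact ⟨K, Set.mem_iUnion₂.2 ⟨i, hi, hK⟩, hxK⟩)
  obtain ⟨i, hi, hKi⟩ := Set.mem_iUnion₂.1 hK
  exact ⟨i, hi, K, hKr, hsub i hi K hKi⟩

lemma IsOrthantOfRank.image_affine (hL : IsOrthantOfRank L r) (a : Fin N → ℤ)
    {A : Matrix (Fin N) (Fin N) ℤ} (hA : IsOrthMat A) :
    IsOrthantOfRank ((fun x => a + A *ᵥ x) '' L) r := by
  obtain ⟨a', A', Y, hA', hY, rfl⟩ := hL
  refine ⟨a + A *ᵥ a', A * A', Y, ?_, hY, ?_⟩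
  · rw [IsOrthMat, transpose_mul, ← Matrix.mul_assoc, Matrix.mul_assoc A, hA', Matrix.mul_one,
      hA]
  · rw [Set.image_image]
    simp only [mulVec_add, mulVec_mulVec, add_assoc]

lemma IsometricOn.mono {Q : Set (Fin N → ℤ)} (hf : IsometricOn f P) (h : Q ⊆ P) :
    IsometricOn f Q :=
  let ⟨a, A, hA, hfA⟩ := hf
  ⟨a, A, hA, fun x hx => hfA x (h hx)⟩

lemma IsometricOn.isOrthantOfRank_image (hf : IsometricOn f L) (hL : IsOrthantOfRank L r) :
    IsOrthantOfRank (f '' L) r := by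
  obtain ⟨a, A, hA, hfA⟩ := hf
  rw [Set.image_congr hfA]
  exact hL.image_affine a hA

lemma IsometricOn.exists_preimage (hf : IsometricOn f P) (hM : IsOrthantOfRank M r)
    (hMP : M ⊆ f '' P) : ∃ W ⊆ P, IsOrthantOfRank W r ∧ f '' W = M := by
  obtain ⟨a, A, hA, hfA⟩ := hf
  have hinv : ∀ x ∈ P, -(Aᵀ *ᵥ a) + Aᵀ *ᵥ f x = x := fun x hx => by
    rw [hfA x hx, mulVec_add, mulVec_mulVec, mul_eq_one_comm.mp hA, one_mulVec,
      neg_add_cancel_left]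
  refine ⟨(fun y => -(Aᵀ *ᵥ a) + Aᵀ *ᵥ y) '' M, ?_, hM.image_affine _ ?_, ?_⟩
  · rintro _ ⟨y, hy, rfl⟩
    obtain ⟨x, hx, rfl⟩ := hMP hy
    simpa only [hinv x hx] using hx
  · rw [IsOrthMat, transpose_transpose]
    exact mul_eq_one_comm.mp hA
  · rw [Set.image_image]
    refine (Set.image_congr fun y hy => ?_).trans (Set.image_id M)
    obtain ⟨x, hx, rfl⟩ := hMP hy
    rw [hinv x hx, id]

lemma IsOrthohedral.image_of_isometricOn (hX : IsOrthohedral X) (hf : IsometricOn f X) :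
    IsOrthohedral (f '' X) := by
  obtain ⟨𝓛, h𝓛, h𝓛o, rfl⟩ := hX
  rw [Set.sUnion_eq_biUnion, Set.image_iUnion₂]
  refine isOrthohedral_biUnion h𝓛 fun L hL => IsOrthant.isOrthohedral ?_
  obtain ⟨k, hk⟩ := h𝓛o L hL
  exact ⟨k, (hf.mono (Set.subset_sUnion_of_mem hL)).isOrthantOfRank_image hk⟩

lemma IsPeiMapOn.isOrthohedral_image (hf : IsPeiMapOn S f) (hD : IsOrthohedral D)
    (hDS : D ⊆ S) : IsOrthohedral (f '' D) := by
  obtain ⟨𝓟, h𝓟, h𝓟o, rfl, -, hiso⟩ := hf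
  have : D = ⋃ P ∈ 𝓟, P ∩ D := by
    rw [← Set.iUnion₂_inter, ← Set.sUnion_eq_biUnion, Set.inter_eq_right.2 hDS]
  rw [this, Set.image_iUnion₂]
  exact isOrthohedral_biUnion h𝓟 fun P hP =>
    ((h𝓟o P hP).isOrthohedral.inter hD).image_of_isometricOn
      ((hiso P hP).mono Set.inter_subset_left)

lemma IsPeiMapOn.exists_isometricOn_subset (hf : IsPeiMapOn S f) (hL : IsOrthantOfRank L r)
    (hLS : L ⊆ S) : ∃ L', IsOrthantOfRank L' r ∧ L' ⊆ L ∧ IsometricOn f L' := by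
  obtain ⟨𝓟, h𝓟, h𝓟o, rfl, -, hiso⟩ := hf
  obtain ⟨P, hP, L', hL', hL'P⟩ := hL.exists_subset_of_subset_biUnion h𝓟
    (fun P hP => (h𝓟o P hP).isOrthohedral) (by rwa [← Set.sUnion_eq_biUnion])
  exact ⟨L', hL', hL'P.trans Set.inter_subset_left,
    (hiso P hP).mono (hL'P.trans Set.inter_subset_right)⟩

lemma IsPeiMapOn.exists_isometricOn_image_subset (hf : IsPeiMapOn S f) (hD : IsOrthohedral D)
    (hDS : D ⊆ S) (hM : IsOrthantOfRank M r) (hMD : M ⊆ f '' D) :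
    ∃ W, IsOrthantOfRank W r ∧ W ⊆ D ∧ IsometricOn f W ∧ f '' W ⊆ M := by
  obtain ⟨𝓟, h𝓟, h𝓟o, rfl, -, hiso⟩ := hf
  have hisoD : ∀ P ∈ 𝓟, IsometricOn f (P ∩ D) := fun P hP =>
    (hiso P hP).mono Set.inter_subset_left
  obtain ⟨P, hP, M', hM', hM'P⟩ := hM.exists_subset_of_subset_biUnion
    (Y := fun P => f '' (P ∩ D)) h𝓟
    (fun P hP => ((h𝓟o P hP).isOrthohedral.inter hD).image_of_isometricOn (hisoD P hP))
    (by
      rw [← Set.image_iUnion₂, ← Set.iUnion₂_inter, ← Set.sUnion_eq_biUnion,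
        Set.inter_eq_right.2 hDS]
      exact hMD)
  obtain ⟨W, hWP, hW, hfW⟩ :=
    (hisoD P hP).exists_preimage hM' (hM'P.trans Set.inter_subset_right)
  exact ⟨W, hW, hWP.trans Set.inter_subset_right, (hisoD P hP).mono hWP,
    hfW ▸ hM'P.trans Set.inter_subset_left⟩

end Maps

lemma nonempty_equiv_of_surjective_of_eq_iff {α β γ : Type*} {g : α → β} {h : α → γ}
    (hg : Function.Surjective g) (hh : Function.Surjective h)
    (hgh : ∀ a b, g a = g b ↔ h a = h b) : Nonempty (β ≃ γ) :=
  ⟨(Setoid.quotientKerEquivOfSurjective g hg).symm.trans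
    ((Quotient.congrRight hgh).trans (Setoid.quotientKerEquivOfSurjective h hh))⟩

section Germ

variable {N : ℕ} {X Y A B : Set (Fin N → ℤ)} {r : ℕ}

lemma commensurable_iff {L M : Set (Fin N → ℤ)} (hL : IsOrthantOfRank L r)
    (hM : IsOrthantOfRank M r) : Commensurable L M ↔ ∃ Z, IsOrthantOfRank Z r ∧ Z ⊆ L ∩ M := by
  constructor
  · rintro ⟨hne, hLr, -⟩
    obtain ⟨Z, hZ, hZs⟩ := exists_isOrthantOfRank_orthRank hne
    exact ⟨Z, by rwa [← hLr, hL.orthRank_eq] at hZ, hZs⟩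
  · rintro ⟨Z, hZ, hZs⟩
    have h : orthRank (L ∩ M) = r := le_antisymm
      ((orthRank_mono Set.inter_subset_left).trans hL.orthRank_eq.le) (le_orthRank hZ hZs)
    exact ⟨hZ.nonempty.mono hZs, by rw [hL.orthRank_eq, h], by rw [hM.orthRank_eq, h]⟩

lemma germOf_eq_germOf_iff {L M : germSet X r} :
    germOf X r L = germOf X r M ↔ ∃ Z, IsOrthantOfRank Z r ∧ Z ⊆ L.1 ∩ M.1 := by
  have hequiv : Equivalence fun L M : germSet X r => Commensurable L.1 M.1 := by
    refine ⟨fun L => ?_, fun {L M} h => ?_, fun {L M K} h₁ h₂ => ?_⟩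
    · exact (commensurable_iff L.2.1 L.2.1).2 ⟨L.1, L.2.1, by simp⟩
    · rw [commensurable_iff L.2.1 M.2.1, Set.inter_comm] at h
      exact (commensurable_iff M.2.1 L.2.1).2 h
    · exact (commensurable_iff L.2.1 K.2.1).2 (M.2.1.exists_subset_inter_trans
        ((commensurable_iff L.2.1 M.2.1).1 h₁) ((commensurable_iff M.2.1 K.2.1).1 h₂))
  exact Quot.eq.trans (hequiv.eqvGen_iff.trans (commensurable_iff L.2.1 M.2.1))

lemma germOf_eq_of_subset {L M : germSet X r} (h : M.1 ⊆ L.1) : germOf X r L = germOf X r M :=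
  germOf_eq_germOf_iff.2 ⟨M.1, M.2.1, Set.subset_inter h subset_rfl⟩

def Germ.inclusion (h : X ⊆ Y) : Germ X r → Germ Y r :=
  Quot.map (fun L => ⟨L.1, L.2.1, L.2.2.trans h⟩) fun _ _ => id

lemma Germ.inclusion_injective (h : X ⊆ Y) : Function.Injective (Germ.inclusion (r := r) h) := by
  refine Quot.ind fun L => Quot.ind fun M hLM => germOf_eq_germOf_iff.2 ?_
  exact (germOf_eq_germOf_iff (L := ⟨L.1, L.2.1, L.2.2.trans h⟩)
    (M := ⟨M.1, M.2.1, M.2.2.trans h⟩)).1 hLM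

lemma germ_union_bijective (hA : IsOrthohedral A) (hB : IsOrthohedral B) (hAB : Disjoint A B) :
    Function.Bijective (Sum.elim (Germ.inclusion (r := r) (Set.subset_union_left (t := B)))
      (Germ.inclusion (Set.subset_union_right (s := A)))) := by
  have hdisj : ∀ (L : germSet A r) (M : germSet B r),
      Germ.inclusion Set.subset_union_left (germOf A r L) ≠
        Germ.inclusion Set.subset_union_right (germOf B r M) := fun L M h => by
    obtain ⟨Z, hZ, hZs⟩ := germOf_eq_germOf_iff.1 h
    obtain ⟨x, hx⟩ := hZ.nonempty
    exact Set.disjoint_left.1 hAB (L.2.2 (hZs hx).1) (M.2.2 (hZs hx).2)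
  refine ⟨?_, ?_⟩
  · rintro (L | L) (M | M) h
    · exact congrArg Sum.inl (Germ.inclusion_injective Set.subset_union_left h)
    · induction L using Quot.ind
      induction M using Quot.ind
      exact (hdisj _ _ h).elim
    · induction L using Quot.ind
      induction M using Quot.ind
      exact (hdisj _ _ h.symm).elim
    · exact congrArg Sum.inr (Germ.inclusion_injective Set.subset_union_right h)
  · refine Quot.ind fun L => ?_
    obtain ⟨Y, hY, L', hL', hL's⟩ := L.2.1.exists_subset_of_subset_biUnion (Set.toFinite {A, B})
      (Y := id) (by simp [hA, hB]) (by simpa using L.2.2)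
    have hL'L : germOf _ r L =
        germOf _ r ⟨L', hL', hL's.trans (Set.inter_subset_left.trans L.2.2)⟩ :=
      germOf_eq_of_subset (hL's.trans Set.inter_subset_left)
    rcases hY with rfl | rfl
    · exact ⟨.inl (germOf Y r ⟨L', hL', hL's.trans Set.inter_subset_right⟩), hL'L.symm⟩
    · exact ⟨.inr (germOf Y r ⟨L', hL', hL's.trans Set.inter_subset_right⟩), hL'L.symm⟩

lemma heightAt_union (hA : IsOrthohedral A) (hB : IsOrthohedral B) (hAB : Disjoint A B)
    [Finite (Germ A r)] [Finite (Germ B r)] :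
    heightAt (A ∪ B) r = heightAt A r + heightAt B r := by
  rw [heightAt, heightAt, heightAt, ← Nat.card_sum]
  exact (Nat.card_eq_of_bijective _ (germ_union_bijective hA hB hAB)).symm

lemma Germ.finite (hX : IsOrthohedral X) (hr : orthRank X ≤ r) : Finite (Germ X r) := by
  obtain ⟨𝓛, h𝓛, h𝓛o, rfl⟩ := hX
  have : Finite {K // K ∈ 𝓛 ∧ IsOrthantOfRank K r} :=
    (h𝓛.subset fun K (hK : K ∈ 𝓛 ∧ _) => hK.1).to_subtype
  refine Finite.of_surjective (fun K : {K // K ∈ 𝓛 ∧ IsOrthantOfRank K r} =>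
    germOf _ r ⟨K.1, K.2.2, Set.subset_sUnion_of_mem K.2.1⟩) ?_
  refine Quot.ind fun L => ?_
  obtain ⟨K, hK, L', hL', hL's⟩ := L.2.1.exists_subset_of_subset_biUnion h𝓛 (Y := id)
    (fun K hK => (h𝓛o K hK).isOrthohedral) (by simpa [← Set.sUnion_eq_biUnion] using L.2.2)
  obtain ⟨k, hk⟩ := h𝓛o K hK
  obtain rfl : k = r := le_antisymm
    (hk.orthRank_eq ▸ (orthRank_mono (Set.subset_sUnion_of_mem hK)).trans hr)
    (hL'.le_of_subset hk (hL's.trans Set.inter_subset_right))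
  refine ⟨⟨K, hK, hk⟩, ?_⟩
  exact (germOf_eq_of_subset (M := ⟨L', hL', hL's.trans (Set.inter_subset_left.trans L.2.2)⟩)
    (hL's.trans Set.inter_subset_right)).trans
      (germOf_eq_of_subset (hL's.trans Set.inter_subset_left)).symm

end Germ

section PeiInjection

variable {N : ℕ} {S D T P : Set (Fin N → ℤ)} {r : ℕ} {f : (Fin N → ℤ) → (Fin N → ℤ)}

lemma IsometricOn.exists_orthant_subset_iff (hf : IsometricOn f P) :
    (∃ Z, IsOrthantOfRank Z r ∧ Z ⊆ P) ↔ ∃ Z, IsOrthantOfRank Z r ∧ Z ⊆ f '' P := by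
  constructor
  · rintro ⟨Z, hZ, hZP⟩
    exact ⟨f '' Z, (hf.mono hZP).isOrthantOfRank_image hZ, Set.image_mono hZP⟩
  · rintro ⟨Z, hZ, hZP⟩
    obtain ⟨W, hWP, hW, -⟩ := hf.exists_preimage hZ hZP
    exact ⟨W, hW, hWP⟩

/-- Both germ sets are quotients of the rank-`r` orthants of `D` on which `f` is an isometry. -/
lemma IsPeiMapOn.nonempty_germ_image_equiv (hf : IsPeiMapOn S f) (hfi : Set.InjOn f S)
    (hD : IsOrthohedral D) (hDS : D ⊆ S) (r : ℕ) : Nonempty (Germ D r ≃ Germ (f '' D) r) := by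
  let G := {W : germSet D r // IsometricOn f W.1}
  have himg : ∀ W : G, f '' W.1.1 ∈ germSet (f '' D) r := fun W =>
    ⟨W.2.isOrthantOfRank_image W.1.2.1, Set.image_mono W.1.2.2⟩
  refine nonempty_equiv_of_surjective_of_eq_iff (g := fun W : G => germOf D r W.1)
    (h := fun W : G => germOf (f '' D) r ⟨_, himg W⟩) ?_ ?_ fun W₁ W₂ => ?_
  · refine Quot.ind fun L => ?_
    obtain ⟨L', hL', hL'L, hiso⟩ := hf.exists_isometricOn_subset L.2.1 (L.2.2.trans hDS)
    exact ⟨⟨⟨L', hL', hL'L.trans L.2.2⟩, hiso⟩, (germOf_eq_of_subset hL'L).symm⟩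
  · refine Quot.ind fun M => ?_
    obtain ⟨W, hW, hWD, hiso, hWM⟩ := hf.exists_isometricOn_image_subset hD hDS M.2.1 M.2.2
    exact ⟨⟨⟨W, hW, hWD⟩, hiso⟩, (germOf_eq_of_subset hWM).symm⟩
  · simp only [germOf_eq_germOf_iff]
    rw [← hfi.image_inter (W₁.1.2.2.trans hDS) (W₂.1.2.2.trans hDS)]
    exact (W₁.2.mono Set.inter_subset_left).exists_orthant_subset_iff

lemma IsPeiMapOn.heightAt_image (hf : IsPeiMapOn S f) (hfi : Set.InjOn f S)
    (hD : IsOrthohedral D) (hDS : D ⊆ S) : heightAt (f '' D) r = heightAt D r :=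
  Nat.card_congr (hf.nonempty_germ_image_equiv hfi hD hDS r).some.symm

/-- The germs of maximal rank of `S` are finitely many and `f` permutes them, so none is left
for `S \ f '' S`. -/
lemma IsPeiMapOn.orthRank_sdiff_image_le (hS : IsOrthohedral S) (hf : IsPeiMapOn S f)
    (hfi : Set.InjOn f S) (hfS : f '' S ⊆ S) : orthRank (S \ f '' S) ≤ orthRank S - 1 := by
  set n := orthRank S
  have hfS' : IsOrthohedral (f '' S) := hf.isOrthohedral_image hS subset_rfl
  have : Finite (Germ S n) := Germ.finite hS le_rfl
  obtain ⟨e⟩ := hf.nonempty_germ_image_equiv hfi hS subset_rfl n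
  have : Finite (Germ (f '' S) n) := Finite.of_equiv _ e
  have : Finite (Germ (S \ f '' S) n) :=
    Germ.finite (hS.diff hfS') (orthRank_mono Set.sdiff_subset)
  have hcard := heightAt_union hfS' (hS.diff hfS') Set.disjoint_sdiff_right (r := n)
  rw [Set.union_sdiff_cancel hfS, hf.heightAt_image hfi hS subset_rfl, left_eq_add, heightAt,
    Finite.card_eq_zero_iff] at hcard
  refine orthRank_le fun k L hL hLS => ?_
  have hkn : k ≤ n := le_orthRank hL (hLS.trans Set.sdiff_subset)
  have hkn' : k ≠ n := by
    rintro rfl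
    exact hcard.elim (germOf _ _ ⟨L, hL, hLS⟩)
  omega

lemma _root_.Set.InjOn.sdiff_image_eq_union (hfi : Set.InjOn f S) (hfS : f '' S ⊆ S)
    (hTS : T ⊆ S) : S \ f '' T = (S \ f '' S) ∪ f '' (S \ T) := by
  rw [hfi.image_sdiff, Set.inter_eq_right.2 hTS,
    Set.sdiff_union_sdiff_cancel hfS (Set.image_mono hTS)]

end PeiInjection

/-- heights of pei-injections are additive under composition:
`h(gf) = h(g) + h(f)` (here `gf` means `g` followed by `f`). -/
theorem stmt17 {N : ℕ} (S : Set (Fin N → ℤ)) (hS : IsOrthohedral S)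
    (f g : (Fin N → ℤ) → (Fin N → ℤ))
    (hf : IsPeiMapOn S f) (hfi : Set.InjOn f S) (hfS : f '' S ⊆ S)
    (hg : IsPeiMapOn S g) (hgi : Set.InjOn g S) (hgS : g '' S ⊆ S) :
    heightAt (S \ (f '' (g '' S))) (orthRank S - 1)
      = heightAt (S \ (g '' S)) (orthRank S - 1)
        + heightAt (S \ (f '' S)) (orthRank S - 1) := by
  have hDf : IsOrthohedral (S \ f '' S) := hS.diff (hf.isOrthohedral_image hS subset_rfl)
  have hDg : IsOrthohedral (S \ g '' S) := hS.diff (hg.isOrthohedral_image hS subset_rfl)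
  have : Finite (Germ (S \ f '' S) (orthRank S - 1)) :=
    Germ.finite hDf (hf.orthRank_sdiff_image_le hS hfi hfS)
  have : Finite (Germ (S \ g '' S) (orthRank S - 1)) :=
    Germ.finite hDg (hg.orthRank_sdiff_image_le hS hgi hgS)
  have : Finite (Germ (f '' (S \ g '' S)) (orthRank S - 1)) :=
    .of_equiv _ (hf.nonempty_germ_image_equiv hfi hDg Set.sdiff_subset _).some
  rw [hfi.sdiff_image_eq_union hfS hgS,
    heightAt_union hDf (hf.isOrthohedral_image hDg Set.sdiff_subset)
      (Set.disjoint_sdiff_left.mono_right (Set.image_mono Set.sdiff_subset)),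
    hf.heightAt_image hfi hDg Set.sdiff_subset, add_comm]

end PeiPaper
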